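/- Kaplansky's criterion: Let R be a complete DVR with uniformizer π and M a flat R-module such that M ⊗_R K has countable dimension over the fraction field K. Then M is a free R-module if and only if ⋂_n π^n M = 0. -/

import Mathlib

/-!
Embed `M` into `V = K ⊗[R] M`, enumerate a countable `K`-basis of `V`, and let `Mₙ` be the elements
of `M` lying in the span of the first `n` basis vectors. Each `Mₙ` is pure in `M`, and the `n`-th
coordinate embeds `Mₙ₊₁ / Mₙ` into `K`. Inductively `Mₙ` is finitely generated, hence free of finite
rank, hence `π`-adically complete because `R` is. Completeness of `Mₙ` makes `M / Mₙ` separated, so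
the image of `Mₙ₊₁` in `K` is a separated `R`-submodule of `K`, which is finitely generated. Thus
every `Mₙ₊₁ / Mₙ` is finitely generated and torsion-free, hence free, and bases of the successive
quotients glue to a basis of `M`. Conversely, a free module over the separated ring `R` is
separated coordinatewise.
-/

open Submodule Pointwise

section Adic

variable {R M : Type*} [CommRing R] [AddCommGroup M] [Module R M]

theorem Ideal.mem_span_singleton_pow_smul_top_iff {π : R} {n : ℕ} {x : M} :
    x ∈ (Ideal.span {π} ^ n • ⊤ : Submodule R M) ↔ ∃ y, π ^ n • y = x := by
  rw [Ideal.span_singleton_pow, ideal_span_singleton_smul, mem_smul_pointwise_iff_exists]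
  simp

theorem isHausdorff_span_singleton_iff {π : R} :
    IsHausdorff (Ideal.span {π}) M ↔ ∀ x : M, (∀ n : ℕ, ∃ y, π ^ n • y = x) → x = 0 := by
  simp only [isHausdorff_iff, SModEq.zero, Ideal.mem_span_singleton_pow_smul_top_iff]

theorem isHausdorff_span_singleton_iff_iInf_range_eq_bot {π : R} :
    IsHausdorff (Ideal.span {π}) M ↔
      ⨅ n : ℕ, LinearMap.range ((π ^ n) • (LinearMap.id : M →ₗ[R] M)) = ⊥ := by
  simp [isHausdorff_span_singleton_iff, eq_bot_iff, SetLike.le_def]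

theorem Module.Basis.mem_smul_top_iff {ι : Type*} (b : Basis ι R M) (I : Ideal R) (x : M) :
    x ∈ I • (⊤ : Submodule R M) ↔ ∀ i, b.repr x i ∈ I := by
  refine ⟨fun hx ↦ ?_, fun hx ↦ ?_⟩
  · refine smul_induction_on hx (fun r hr y _ i ↦ ?_) (fun y z hy hz i ↦ ?_)
    · simpa using I.mul_mem_right _ hr
    · simpa using I.add_mem (hy i) (hz i)
  · rw [← b.linearCombination_repr x, Finsupp.linearCombination_apply]
    exact sum_mem fun i _ ↦ smul_mem_smul (hx i) trivial

theorem Module.Basis.isHausdorff {ι : Type*} (b : Basis ι R M) (I : Ideal R)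
    [IsHausdorff I R] : IsHausdorff I M := by
  refine ⟨fun x hx ↦ b.repr.injective <| Finsupp.ext fun i ↦ ?_⟩
  rw [map_zero, Finsupp.zero_apply]
  refine IsHausdorff.haus ‹_› _ fun n ↦ ?_
  simpa [SModEq.zero] using (b.mem_smul_top_iff (I ^ n) x).1 (SModEq.zero.1 (hx n)) i

theorem Module.Basis.isPrecomplete {ι : Type*} [Finite ι] (b : Basis ι R M) (I : Ideal R)
    [IsPrecomplete I R] : IsPrecomplete I M := by
  have hcoord : ∀ {n : ℕ} {x y : M}, x ≡ y [SMOD (I ^ n • ⊤ : Submodule R M)] ↔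
      ∀ i, b.repr x i ≡ b.repr y i [SMOD (I ^ n • ⊤ : Submodule R R)] := by
    simp [SModEq.sub_mem, b.mem_smul_top_iff]
  refine isPrecomplete_iff.2 fun f hf ↦ ?_
  choose L hL using fun i ↦ IsPrecomplete.prec ‹_› fun {m n} hmn ↦ hcoord.1 (hf hmn) i
  have := Fintype.ofFinite ι
  refine ⟨∑ i, L i • b i, fun n ↦ hcoord.2 fun i ↦ ?_⟩
  rw [b.repr_sum_self]
  exact hL i n

theorem Submodule.mem_of_pow_smul_mem {π : R} {P : Submodule R M}
    (hpure : ∀ x : M, π • x ∈ P → x ∈ P) (n : ℕ) {x : M} (hx : π ^ n • x ∈ P) : x ∈ P := by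
  induction n with
  | zero => simpa using hx
  | succ n ih => exact ih (hpure _ (by rwa [smul_smul, ← pow_succ']))

/-- The completeness of `P` is what makes the quotient separated: the `π`-adic approximations
`x - πⁿ yₙ ∈ P` of an infinitely divisible class form a Cauchy sequence in `P`, and `x` differs from
its limit by an infinitely divisible element of `M`. -/
theorem isHausdorff_quotient_of_isPrecomplete {π : R} (P : Submodule R M)
    [IsHausdorff (Ideal.span {π}) M] [IsPrecomplete (Ideal.span {π}) P]
    (hpure : ∀ x : M, π • x ∈ P → x ∈ P) : IsHausdorff (Ideal.span {π}) (M ⧸ P) := by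
  refine isHausdorff_span_singleton_iff.2 fun x' hx' ↦ ?_
  obtain ⟨x, rfl⟩ := Submodule.Quotient.mk_surjective P x'
  choose y' hy' using hx'
  choose y hy using fun n ↦ Submodule.Quotient.mk_surjective P (y' n)
  have hc : ∀ n, x - π ^ n • y n ∈ P := fun n ↦ by
    rw [← Submodule.Quotient.eq, Quotient.mk_smul, hy, hy']
  set c : ℕ → P := fun n ↦ ⟨_, hc n⟩
  have hcauchy : AdicCompletion.IsAdicCauchy (Ideal.span {π}) P c := by
    refine (AdicCompletion.isAdicCauchy_iff _ _ c).2 fun n ↦ SModEq.sub_mem.2 ?_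
    have hstep : π ^ n • (π • y (n + 1) - y n) =
        x - π ^ n • y n - (x - π ^ (n + 1) • y (n + 1)) := by
      rw [smul_sub, smul_smul, ← pow_succ]; abel
    have hd : π • y (n + 1) - y n ∈ P :=
      P.mem_of_pow_smul_mem hpure n (hstep ▸ P.sub_mem (hc n) (hc (n + 1)))
    exact Ideal.mem_span_singleton_pow_smul_top_iff.2 ⟨⟨_, hd⟩, Subtype.ext hstep⟩
  obtain ⟨L, hL⟩ := IsPrecomplete.prec ‹_› hcauchy
  have hxL : x - L = 0 := by
    refine isHausdorff_span_singleton_iff.1 ‹_› _ fun n ↦ ?_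
    obtain ⟨w, hw⟩ := Ideal.mem_span_singleton_pow_smul_top_iff.1 (SModEq.sub_mem.1 (hL n))
    refine ⟨y n + w, ?_⟩
    rw [smul_add, ← coe_smul, hw]
    simp only [c, Submodule.coe_sub]
    abel
  rw [Quotient.mk_eq_zero, sub_eq_zero.1 hxL]
  exact L.2

end Adic

/-- A separated submodule of `K` is bounded, hence contained in a cyclic module: if `πᵗ J ⊄ R x`
for every `t`, the valuation ring property makes `x` divisible in `J` by every power of `π`. -/
theorem Submodule.fg_of_isHausdorff {R K : Type*} [CommRing R] [IsDomain R] [ValuationRing R]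
    [IsNoetherianRing R] [Field K] [Algebra R K] [IsFractionRing R K] {π : R} (hπ : π ≠ 0)
    (J : Submodule R K) [IsHausdorff (Ideal.span {π}) J] : J.FG := by
  obtain rfl | hJ := eq_or_ne J ⊥
  · exact fg_bot
  obtain ⟨x, hxJ, hx⟩ := exists_mem_ne_zero_of_ne_bot hJ
  by_cases hbdd : ∃ t : ℕ, ∀ y ∈ J, π ^ t • y ∈ R ∙ x
  · obtain ⟨t, ht⟩ := hbdd
    have hπt : algebraMap R K (π ^ t) ≠ 0 :=
      (map_ne_zero_iff _ (IsFractionRing.injective R K)).2 (pow_ne_zero t hπ)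
    refine (fg_span_singleton ((algebraMap R K (π ^ t))⁻¹ * x)).of_le fun y hy ↦ ?_
    obtain ⟨r, hr⟩ := mem_span_singleton.1 (ht y hy)
    refine mem_span_singleton.2 ⟨r, ?_⟩
    rw [Algebra.smul_def] at hr ⊢
    field_simp
    rw [hr, Algebra.smul_def]
  push Not at hbdd
  refine absurd (congrArg Subtype.val <|
    isHausdorff_span_singleton_iff.1 ‹_› ⟨x, hxJ⟩ fun n ↦ ?_) hx
  obtain ⟨y, hyJ, hy⟩ := hbdd n
  rcases ValuationRing.isInteger_or_isInteger R (x / (π ^ n • y)) with ⟨r, hr⟩ | ⟨s, hs⟩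
  · refine ⟨⟨r • y, J.smul_mem r hyJ⟩, Subtype.ext ?_⟩
    have : π ^ n • y ≠ 0 := fun h ↦ hy (h ▸ zero_mem _)
    change π ^ n • r • y = x
    rw [smul_comm, Algebra.smul_def r, hr, div_mul_cancel₀ _ this]
  · refine absurd (mem_span_singleton.2 ⟨s, ?_⟩) hy
    rw [Algebra.smul_def, hs, inv_div, div_mul_cancel₀ _ hx]

section Chain

variable {R M : Type*} [Ring R] [AddCommGroup M] [Module R M]

theorem exists_linearIndepOn_union_of_free_map_mkQ [Nontrivial R] {P N : Submodule R M}
    (hPN : P ≤ N) [Module.Free R (N.map P.mkQ)] {s : Set M} (hs : LinearIndepOn R id s)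
    (hsP : span R s = P) : ∃ t, LinearIndepOn R id (s ∪ t) ∧ span R (s ∪ t) = N := by
  let b := Module.Free.chooseBasis R (N.map P.mkQ)
  choose l hl using fun i ↦ P.mkQ_surjective (b i)
  have hbl : P.mkQ ∘ l = (N.map P.mkQ).subtype ∘ b := funext hl
  have hli : LinearIndependent R (P.mkQ ∘ l) :=
    hbl ▸ b.linearIndependent.map' _ (ker_subtype _)
  refine ⟨Set.range l, hs.union_id_of_quotient (hsP ▸ subset_span) ?_, ?_⟩
  · exact (linearIndepOn_range_iff hli.injective.of_comp _).2 hli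
  · have hmap : (span R (Set.range l)).map P.mkQ = N.map P.mkQ := by
      rw [map_span, ← Set.range_comp, hbl, Set.range_comp, ← map_span, b.span_eq,
        Submodule.map_top, range_subtype]
    rw [span_union, hsP, ← comap_map_mkQ, hmap, comap_map_mkQ, sup_eq_right.2 hPN]

theorem Module.Free.of_iSup_eq_top (N : ℕ → Submodule R M) (h0 : N 0 = ⊥)
    (hmono : Monotone N) (htop : ⨆ n, N n = ⊤)
    (hfree : ∀ n, Module.Free R ((N (n + 1)).map (N n).mkQ)) : Module.Free R M := by
  cases subsingleton_or_nontrivial R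
  · have := Module.subsingleton R M
    infer_instance
  choose t ht using fun n (s : {s : Set M // LinearIndepOn R id s ∧ span R s = N n}) ↦
    exists_linearIndepOn_union_of_free_map_mkQ (hmono n.le_succ) s.2.1 s.2.2
  let S : ∀ n, {s : Set M // LinearIndepOn R id s ∧ span R s = N n} := fun n ↦
    Nat.rec ⟨∅, linearIndepOn_empty R id, by rw [span_empty, h0]⟩
      (fun n s ↦ ⟨s.1 ∪ t n s, ht n s⟩) n
  have hS : Monotone fun n ↦ (S n).1 :=
    monotone_nat_of_le_succ fun n ↦ Set.subset_union_left
  have hli : LinearIndepOn R id (⋃ n, (S n).1) :=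
    linearIndepOn_iUnion_of_directed hS.directed_le fun n ↦ (S n).2.1
  refine .of_basis (Basis.mk hli ?_)
  rw [Set.range_comp', Subtype.range_coe, Set.image_id, span_iUnion]
  simp_rw [(S _).2.2, htop, le_refl]

end Chain

namespace Module.Basis

variable {K V ι : Type*} [Semiring K] [AddCommMonoid V] [Module K V] (b : Basis ι K V) (e : ι → ℕ)

def spanBelow (n : ℕ) : Submodule K V := span K (b '' {i | e i < n})

/-- The coordinate of index `i` with `e i = n`, or `0` if there is none. -/
noncomputable def coordAt (n : ℕ) : V →ₗ[K] K :=
  Finsupp.lapply n ∘ₗ Finsupp.lmapDomain K K e ∘ₗ b.repr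

theorem spanBelow_zero : b.spanBelow e 0 = ⊥ := by
  simp [spanBelow]

theorem spanBelow_mono : Monotone (b.spanBelow e) :=
  fun _ _ hmn ↦ span_mono <| Set.image_mono fun _ hi ↦ lt_of_lt_of_le hi hmn

theorem exists_mem_spanBelow (x : V) : ∃ n, x ∈ b.spanBelow e n := by
  obtain ⟨n, hn⟩ := ((b.repr x).support.image e).exists_nat_subset_range
  refine ⟨n, b.mem_span_image.2 fun i hi ↦ ?_⟩
  simpa using hn (Finset.mem_image_of_mem e hi)

theorem spanBelow_succ_inf_ker_coordAt (he : Function.Injective e) (n : ℕ) :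
    b.spanBelow e (n + 1) ⊓ LinearMap.ker (b.coordAt e n) = b.spanBelow e n := by
  ext x
  have hcoord : ∀ i, e i = n → b.coordAt e n x = b.repr x i := fun i hi ↦ by
    simp [coordAt, ← hi, Finsupp.mapDomain_apply he]
  simp only [spanBelow, mem_inf, b.mem_span_image, LinearMap.mem_ker, Set.subset_def,
    Finset.mem_coe, Finsupp.mem_support_iff, Set.mem_ofPred_eq]
  refine ⟨fun ⟨hlt, h0⟩ i hi ↦ (Nat.lt_succ_iff.1 (hlt i hi)).lt_of_ne fun hin ↦
    hi (hcoord i hin ▸ h0), fun hlt ↦ ⟨fun i hi ↦ (hlt i hi).trans n.lt_succ_self, ?_⟩⟩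
  by_cases hn : n ∈ Set.range e
  · obtain ⟨i, rfl⟩ := hn
    rw [hcoord i rfl]
    by_contra hi
    exact (hlt i hi).false
  · simp [coordAt, Finsupp.mapDomain_of_notMem_range _ _ hn]

end Module.Basis

theorem isTorsionFree_quotient_comap_restrictScalars {R K V M : Type*} [CommRing R] [IsDomain R]
    [Field K] [Algebra R K] [IsFractionRing R K] [AddCommGroup V] [Module K V] [Module R V]
    [IsScalarTower R K V] [AddCommGroup M] [Module R M] (φ : M →ₗ[R] V) (W : Submodule K V) :
    Module.IsTorsionFree R (M ⧸ (W.restrictScalars R).comap φ) := by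
  refine .of_smul_eq_zero fun r x' hrx ↦ or_iff_not_imp_left.2 fun hr ↦ ?_
  obtain ⟨x, rfl⟩ := Submodule.Quotient.mk_surjective _ x'
  rw [← Quotient.mk_smul, Quotient.mk_eq_zero, mem_comap, map_smul, restrictScalars_mem,
    ← algebraMap_smul K] at hrx
  rw [Quotient.mk_eq_zero, mem_comap, restrictScalars_mem,
    ← inv_smul_smul₀ ((map_ne_zero_iff _ (IsFractionRing.injective R K)).2 hr) (φ x)]
  exact W.smul_mem _ hrx

section Kaplansky

variable {R K V M : Type*} [CommRing R] [IsDomain R] [IsDiscreteValuationRing R] {π : R}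
  [Field K] [Algebra R K] [IsFractionRing R K]
  [AddCommGroup V] [Module K V] [Module R V] [IsScalarTower R K V]
  [AddCommGroup M] [Module R M]

/-- `g` embeds `N / P` into `K`; completeness of the free module `P` makes the image of `N`
separated, hence finitely generated. -/
theorem Submodule.fg_of_inf_ker_eq [Module.IsTorsionFree R M]
    [IsPrecomplete (Ideal.span {π}) R] [IsHausdorff (Ideal.span {π}) M] (hπ : π ≠ 0)
    {P N : Submodule R M} (g : M →ₗ[R] K) (hker : N ⊓ LinearMap.ker g = P)
    (hpure : ∀ x : M, π • x ∈ P → x ∈ P) (hP : P.FG) : N.FG := by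
  have := Module.Finite.iff_fg.2 hP
  have := (Module.Free.chooseBasis R P).isPrecomplete (Ideal.span {π})
  have := isHausdorff_quotient_of_isPrecomplete P hpure
  have : IsHausdorff (Ideal.span {π}) (N.map g) := by
    refine isHausdorff_span_singleton_iff.2 fun ⟨_, x, hxN, rfl⟩ hdiv ↦ Subtype.ext ?_
    choose z hz using hdiv
    choose y hyN hy using fun n ↦ (z n).2
    have hxP : x ∈ P := by
      rw [← Quotient.mk_eq_zero]
      refine isHausdorff_span_singleton_iff.1 ‹_› _ fun n ↦ ⟨Quotient.mk (y n), ?_⟩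
      rw [← Quotient.mk_smul, Submodule.Quotient.eq, ← hker]
      refine ⟨N.sub_mem (N.smul_mem _ (hyN n)) hxN, ?_⟩
      change g (π ^ n • y n - x) = 0
      rw [map_sub, map_smul, hy, ← coe_smul, hz, sub_self]
    exact (hker ▸ hxP).2
  exact fg_of_fg_map_of_fg_inf_ker g (fg_of_isHausdorff hπ _) (hker ▸ hP)

theorem Module.free_of_isHausdorff_of_rank_le_aleph0 [IsPrecomplete (Ideal.span {π}) R]
    [IsHausdorff (Ideal.span {π}) M] (hπ : π ≠ 0) (φ : M →ₗ[R] V) (hφ : Function.Injective φ)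
    (hV : Module.rank K V ≤ Cardinal.aleph0) : Module.Free R M := by
  have : IsTorsionFree R V := .trans K
  have : IsTorsionFree R M := hφ.moduleIsTorsionFree φ (map_smul φ)
  let b := Free.chooseBasis K V
  have : Countable (Free.ChooseBasisIndex K V) :=
    Cardinal.mk_le_aleph0_iff.1 (Free.rank_eq_card_chooseBasisIndex K V ▸ hV)
  obtain ⟨e, he⟩ := exists_injective_nat (Free.ChooseBasisIndex K V)
  let N : ℕ → Submodule R M := fun n ↦ ((b.spanBelow e n).restrictScalars R).comap φ
  have hquot : ∀ n, IsTorsionFree R (M ⧸ N n) := fun n ↦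
    isTorsionFree_quotient_comap_restrictScalars φ _
  have hpure : ∀ n x, π • x ∈ N n → x ∈ N n := fun n x hx ↦ by
    rw [← Quotient.mk_eq_zero, ← smul_eq_zero_iff_right hπ, ← Quotient.mk_smul,
      Quotient.mk_eq_zero]
    exact hx
  have h0 : N 0 = ⊥ := by simp [N, b.spanBelow_zero, LinearMap.ker_eq_bot.2 hφ]
  have hker : ∀ n, N (n + 1) ⊓ LinearMap.ker ((b.coordAt e n).restrictScalars R ∘ₗ φ) = N n :=
    fun n ↦ by
      ext x
      simp [N, ← b.spanBelow_succ_inf_ker_coordAt e he n]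
  have hfg : ∀ n, (N n).FG := fun n ↦ by
    induction n with
    | zero => exact h0 ▸ fg_bot
    | succ n ih => exact fg_of_inf_ker_eq hπ _ (hker n) (hpure n) ih
  refine Free.of_iSup_eq_top N h0 (fun m n hmn ↦ comap_mono (b.spanBelow_mono e hmn)) ?_
    fun n ↦ ?_
  · refine eq_top_iff.2 fun x _ ↦ ?_
    obtain ⟨n, hn⟩ := b.exists_mem_spanBelow e (φ x)
    exact mem_iSup_of_mem n hn
  · have := hquot n
    have := Module.Finite.iff_fg.2 ((hfg (n + 1)).map (N n).mkQ)
    infer_instance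

end Kaplansky

open TensorProduct

/-- Kaplansky's criterion: over a complete DVR `R` with uniformizer `π` and fraction
field `K`, a flat `R`-module `M` with `dim_K (K ⊗ M)` countable is free iff
`⋂ₙ πⁿ M = 0`. -/
theorem stmt13 {R : Type} [CommRing R] [IsDomain R] [IsDiscreteValuationRing R]
    (π : R) (hπ : Irreducible π) [IsAdicComplete (Ideal.span {π}) R]
    (M : Type) [AddCommGroup M] [Module R M] [Module.Flat R M]
    (hcount : Module.rank (FractionRing R) (FractionRing R ⊗[R] M) ≤ Cardinal.aleph0) :
    Module.Free R M ↔
      (⨅ n : ℕ, LinearMap.range ((π ^ n) • (LinearMap.id : M →ₗ[R] M))) = ⊥ := by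
  rw [← isHausdorff_span_singleton_iff_iInf_range_eq_bot]
  refine ⟨fun _ ↦ (Module.Free.chooseBasis R M).isHausdorff _, fun _ ↦ ?_⟩
  exact Module.free_of_isHausdorff_of_rank_le_aleph0 hπ.ne_zero _
    (Module.Flat.tensorProduct_mk_injective R M (FractionRing R)) hcount
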